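/- Let φ: G → H be a graph homomorphism with G simply connected, let A ⊆ E(G) be φ-stable, and let I be an A-intersection invariant (either I_A or I_{A,u}). Then any two odd closed walks C and C' of G satisfy I(C) = I(C'). -/

import Mathlib

/-!
A homotopy step changes the edge multiset of a walk either by a backtrack `a w a`, which adds or
removes an edge twice, or by a substitution `a b c ↦ a b' c`, which exchanges the edges
`ab, bc` for `ab', b'c`. So the parity of `|Ẽ(P) ∩ S|` is a homotopy invariant as soon as
every closed walk `a b c b' a` meets `S` evenly. For `φ`-stable `A` this holds for `S = A` and
`S = A_u`: either `φ b = φ b'` or `φ a = φ c`, and the edges are paired off by equal images, or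
the image is a 4-cycle of `H`, which puts all four edges into one class `[e]_φ`; at most one
vertex of that 4-cycle is `u`, and it lies on two of its edges.

Given odd closed walks `C` at `v` and `C'` at `v'` and a walk `q` from `v` to `v'`, simple
connectivity makes `C` homotopic to `q C' q⁻¹`, which traverses `q` twice and so meets every `S`
with the parity of `C'`.
-/

namespace Discrete

variable {V : Type*} {W : Type*}

/-- `IsWalk G l` : the nonempty list `l` of vertices forms a walk in `G`. -/
def IsWalk (G : SimpleGraph V) : List V → Prop
  | [] => False
  | [_] => True
  | a :: b :: l => G.Adj a b ∧ IsWalk G (b :: l)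

/-- One elementary homotopy step: substitution, insertion, or deletion. -/
inductive Step (G : SimpleGraph V) : List V → List V → Prop
  | sub (p q : List V) (a b c b' : V) (h1 : G.Adj a b') (h2 : G.Adj b' c) :
      Step G (p ++ a :: b :: c :: q) (p ++ a :: b' :: c :: q)
  | ins (p q : List V) (a w : V) (h : G.Adj a w) :
      Step G (p ++ a :: q) (p ++ a :: w :: a :: q)
  | del (p q : List V) (a w : V) :
      Step G (p ++ a :: w :: a :: q) (p ++ a :: q)

/-- Two walks are homotopic if one may be transformed into the other via a
finite sequence of substitution, insertion and deletion steps. -/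
def Homotopic (G : SimpleGraph V) : List V → List V → Prop :=
  Relation.ReflTransGen (Step G)

/-- The multiset of edges of a walk, counted with multiplicity. -/
def walkEdges (l : List V) : Multiset (Sym2 V) :=
  ↑((l.zip l.tail).map (Function.uncurry Sym2.mk))

/-- A closed walk: a walk whose endpoints coincide. -/
def IsClosedWalk (G : SimpleGraph V) (l : List V) : Prop :=
  IsWalk G l ∧ l.head? = l.getLast?

/-- A closed walk based at `v0`. -/
def IsClosedWalkAt (G : SimpleGraph V) (v0 : V) (l : List V) : Prop :=
  IsWalk G l ∧ l.head? = some v0 ∧ l.getLast? = some v0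

/-- A cycle, recorded as a closed walk `v0 v1 ... v_{k-1} v0` of length at
least 3 whose vertices `v0, ..., v_{k-1}` are distinct. -/
def IsCycleList (G : SimpleGraph V) (l : List V) : Prop :=
  IsClosedWalk G l ∧ l.dropLast.Nodup ∧ 4 ≤ l.length

/-- `G` is simply connected: any two walks with the same endpoints and lengths
of the same parity are homotopic. -/
def SimplyConnected (G : SimpleGraph V) : Prop :=
  G.Connected ∧ ∀ P P' : List V, IsWalk G P → IsWalk G P' →
    P.head? = P'.head? → P.getLast? = P'.getLast? →
    (P.length - 1) % 2 = (P'.length - 1) % 2 → Homotopic G P P'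

/-- Two edges of `H` lie in a common 4-cycle of `H`. -/
def InCommonC4 (H : SimpleGraph W) (e f : Sym2 W) : Prop :=
  ∃ a b c d : W, a ≠ b ∧ a ≠ c ∧ a ≠ d ∧ b ≠ c ∧ b ≠ d ∧ c ≠ d ∧
    H.Adj a b ∧ H.Adj b c ∧ H.Adj c d ∧ H.Adj d a ∧
    (e = s(a, b) ∨ e = s(b, c) ∨ e = s(c, d) ∨ e = s(d, a)) ∧
    (f = s(a, b) ∨ f = s(b, c) ∨ f = s(c, d) ∨ f = s(d, a))

/-- The equivalence relation on `E(H)` generated by lying in a common `C4`;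
`C4Equiv H e f` says `f` lies in the `C4`-closure of `e`. -/
def C4Equiv (H : SimpleGraph W) : Sym2 W → Sym2 W → Prop :=
  Relation.EqvGen (InCommonC4 H)

/-- Two edges share an endpoint. -/
def Touch (e f : Sym2 V) : Prop := ∃ v, v ∈ e ∧ v ∈ f

/-- `[e]_φ`: the edge set of the connected component containing `e` of the
subgraph of `G` induced by the edge set `φ⁻¹(C4-closure of φ(e))`. -/
def PhiClass {G : SimpleGraph V} {H : SimpleGraph W} (φ : G →g H) (e : Sym2 V) :
    Set (Sym2 V) :=
  {e' | Relation.ReflTransGen (fun a b =>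
      a ∈ G.edgeSet ∧ b ∈ G.edgeSet ∧
      C4Equiv H (Sym2.map φ a) (Sym2.map φ e) ∧
      C4Equiv H (Sym2.map φ b) (Sym2.map φ e) ∧ Touch a b) e e'}

/-- `A ⊆ E(G)` is `φ`-stable if it is a union of classes `[e]_φ`. -/
def PhiStable {G : SimpleGraph V} {H : SimpleGraph W} (φ : G →g H)
    (A : Set (Sym2 V)) : Prop :=
  A ⊆ G.edgeSet ∧ ∀ e ∈ A, PhiClass φ e ⊆ A

/-- `A_u`: the edges of `A` having an endpoint in `φ⁻¹(u)`. -/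
def Au {G : SimpleGraph V} {H : SimpleGraph W} (φ : G →g H)
    (A : Set (Sym2 V)) (u : W) : Set (Sym2 V) :=
  {e ∈ A | ∃ v ∈ e, φ v = u}

open Classical in
/-- The intersection invariant `|F ∩ A| mod 2` of a multiset of edges. -/
noncomputable def inv2 (A : Set (Sym2 V)) (F : Multiset (Sym2 V)) : ℕ :=
  (F.filter (· ∈ A)).card % 2

/-- Concatenation of closed walks. -/
def catWalk (l l' : List V) : List V := l ++ l'.tail

/-- `n`-fold concatenation power of a closed walk based at `v0`. -/
def powWalk (v0 : V) (l : List V) : ℕ → List V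
  | 0 => [v0]
  | n + 1 => catWalk l (powWalk v0 l n)

/-- The discrete fundamental group `π₁(G)` is cyclic: some closed walk `P`
based at a vertex `v0` has the property that every closed walk based at `v0`
is homotopic to a power of `P` or of its reverse. -/
def CyclicPi1 (G : SimpleGraph V) : Prop :=
  G.Connected ∧ ∃ (v0 : V) (P : List V), IsClosedWalkAt G v0 P ∧
    ∀ Q : List V, IsClosedWalkAt G v0 Q →
      ∃ n : ℕ, Homotopic G Q (powWalk v0 P n) ∨ Homotopic G Q (powWalk v0 P.reverse n)

/-- `H` contains no cycle of length `n`. -/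
def CFree (H : SimpleGraph V) (n : ℕ) : Prop :=
  ∀ (v : V) (c : H.Walk v v), c.IsCycle → c.length ≠ n


section Walks

variable {G : SimpleGraph V}

lemma isWalk_cons_cons {a b : V} {l : List V} :
    IsWalk G (a :: b :: l) ↔ G.Adj a b ∧ IsWalk G (b :: l) := Iff.rfl

lemma isWalk_append_cons_iff (p : List V) (x : V) (r : List V) :
    IsWalk G (p ++ x :: r) ↔ IsWalk G (p ++ [x]) ∧ IsWalk G (x :: r) := by
  induction p with
  | nil => exact ⟨fun h => ⟨trivial, h⟩, And.right⟩
  | cons a t ih =>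
    cases t with
    | nil => exact ⟨fun h => ⟨⟨h.1, trivial⟩, h.2⟩, fun h => ⟨h.1.1, h.2⟩⟩
    | cons b t =>
      simp only [List.cons_append, isWalk_cons_cons] at ih ⊢
      rw [ih, and_assoc]

lemma IsWalk.of_step {l l' : List V} (hst : Step G l l') (hl : IsWalk G l) : IsWalk G l' := by
  cases hst with
  | sub p q a b c b' hab' hb'c =>
    rw [isWalk_append_cons_iff] at hl ⊢
    exact ⟨hl.1, hab', hb'c, hl.2.2.2⟩
  | ins p q a w haw =>
    rw [isWalk_append_cons_iff] at hl ⊢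
    exact ⟨hl.1, haw, haw.symm, hl.2⟩
  | del p q a w =>
    rw [isWalk_append_cons_iff] at hl ⊢
    exact ⟨hl.1, hl.2.2.2⟩

lemma IsWalk.of_homotopic {l l' : List V} (h : Homotopic G l l') (hl : IsWalk G l) :
    IsWalk G l' := by
  induction h with
  | refl => exact hl
  | tail _ hst ih => exact ih.of_step hst

lemma isWalk_support {u v : V} (p : G.Walk u v) : IsWalk G p.support := by
  induction p with
  | nil => trivial
  | cons h p ih => cases p <;> exact ⟨h, ih⟩

lemma head?_support {u v : V} (p : G.Walk u v) : p.support.head? = some u := by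
  cases p <;> rfl

lemma getLast?_support {u v : V} (p : G.Walk u v) : p.support.getLast? = some v := by
  simp [List.getLast?_eq_some_getLast]

lemma IsWalk.exists_support_eq {l : List V} (hl : IsWalk G l) :
    ∃ (u v : V) (p : G.Walk u v), p.support = l := by
  induction l with
  | nil => exact hl.elim
  | cons a t ih =>
    cases t with
    | nil => exact ⟨a, a, .nil, rfl⟩
    | cons b t =>
      obtain ⟨u, v, p, hp⟩ := ih hl.2
      obtain rfl : b = u := by simpa [hp] using p.head_support
      exact ⟨a, v, .cons hl.1 p, by simp [hp]⟩

lemma IsClosedWalk.exists_support_eq {l : List V} (hl : IsClosedWalk G l) :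
    ∃ (v : V) (c : G.Walk v v), c.support = l := by
  obtain ⟨u, v, p, rfl⟩ := hl.1.exists_support_eq
  obtain rfl : u = v := by
    simpa [List.head?_eq_some_head, List.getLast?_eq_some_getLast] using hl.2
  exact ⟨u, p, rfl⟩

lemma walkEdges_cons_cons (a b : V) (l : List V) :
    walkEdges (a :: b :: l) = s(a, b) ::ₘ walkEdges (b :: l) := rfl

lemma walkEdges_append_cons (p : List V) (x : V) (r : List V) :
    walkEdges (p ++ x :: r) = walkEdges (p ++ [x]) + walkEdges (x :: r) := by
  induction p with
  | nil => simp [walkEdges]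
  | cons a t ih =>
    cases t with
    | nil => simp [walkEdges]
    | cons b t =>
      simp only [List.cons_append, walkEdges_cons_cons] at ih ⊢
      rw [ih, Multiset.cons_add]

lemma walkEdges_support {u v : V} (p : G.Walk u v) : walkEdges p.support = ↑p.edges := by
  induction p with
  | nil => rfl
  | cons h p ih =>
    rw [SimpleGraph.Walk.support_cons, ← p.cons_tail_support, walkEdges_cons_cons,
      p.cons_tail_support, ih]
    rfl

end Walks

section Parity

variable {G : SimpleGraph V} {S : Set (Sym2 V)}

lemma inv2_add (F F' : Multiset (Sym2 V)) :
    inv2 S (F + F') = (inv2 S F + inv2 S F') % 2 := by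
  classical
  rw [inv2, inv2, inv2, Multiset.filter_add, Multiset.card_add, Nat.add_mod]

lemma inv2_pair_congr {e f e' f' : Sym2 V} (h : (e ∈ S ↔ f ∈ S) ↔ (e' ∈ S ↔ f' ∈ S)) :
    inv2 S {e, f} = inv2 S {e', f'} := by
  classical
  by_cases he : e ∈ S <;> by_cases hf : f ∈ S <;> by_cases he' : e' ∈ S <;>
    by_cases hf' : f' ∈ S <;> simp_all [inv2, Multiset.filter_singleton]

lemma inv2_add_self_add (F F' : Multiset (Sym2 V)) : inv2 S (F + F + F') = inv2 S F' := by
  classical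
  simp only [inv2, Multiset.filter_add, Multiset.card_add]
  omega

lemma inv2_walkEdges_backtrack (p q : List V) (a w : V) :
    inv2 S (walkEdges (p ++ a :: w :: a :: q)) = inv2 S (walkEdges (p ++ a :: q)) := by
  have hsplit : walkEdges (p ++ a :: w :: a :: q) =
      {s(a, w)} + {s(a, w)} + walkEdges (p ++ a :: q) := by
    rw [walkEdges_append_cons, walkEdges_cons_cons, walkEdges_cons_cons, Sym2.eq_swap (a := w),
      walkEdges_append_cons p a q, ← Multiset.singleton_add, ← Multiset.singleton_add]
    abel
  rw [hsplit, inv2_add_self_add]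

/-- The closed walk `a b c b' a` meets `S` in an even number of edges. -/
def MeetsSquaresEvenly (G : SimpleGraph V) (S : Set (Sym2 V)) : Prop :=
  ∀ ⦃a b c b' : V⦄, G.Adj a b → G.Adj b c → G.Adj a b' → G.Adj b' c →
    ((s(a, b) ∈ S ↔ s(b, c) ∈ S) ↔ (s(a, b') ∈ S ↔ s(b', c) ∈ S))

lemma inv2_walkEdges_step (hS : MeetsSquaresEvenly G S) {l l' : List V} (hst : Step G l l')
    (hl : IsWalk G l) : inv2 S (walkEdges l) = inv2 S (walkEdges l') := by
  cases hst with
  | sub p q a b c b' hab' hb'c =>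
    obtain ⟨hab, hbc, -⟩ := ((isWalk_append_cons_iff _ _ _).mp hl).2
    have hsplit : ∀ x, walkEdges (p ++ a :: x :: c :: q) =
        walkEdges (p ++ [a]) + ({s(a, x), s(x, c)} + walkEdges (c :: q)) := fun x => by
      rw [walkEdges_append_cons, walkEdges_cons_cons, walkEdges_cons_cons]; rfl
    rw [hsplit, hsplit, inv2_add, inv2_add {_, _}, inv2_pair_congr (hS hab hbc hab' hb'c),
      ← inv2_add, ← inv2_add]
  | ins p q a w => exact (inv2_walkEdges_backtrack p q a w).symm
  | del p q a w => exact inv2_walkEdges_backtrack p q a w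

lemma inv2_walkEdges_homotopic (hS : MeetsSquaresEvenly G S) {l l' : List V}
    (h : Homotopic G l l') (hl : IsWalk G l) : inv2 S (walkEdges l) = inv2 S (walkEdges l') := by
  induction h with
  | refl => rfl
  | tail hll' hst ih => exact ih.trans (inv2_walkEdges_step hS hst (hl.of_homotopic hll'))

end Parity

theorem inv2_walkEdges_eq_of_odd {G : SimpleGraph V} {S : Set (Sym2 V)} (hG : SimplyConnected G)
    (hS : MeetsSquaresEvenly G S) {C C' : List V} (hC : IsClosedWalk G C)
    (hC' : IsClosedWalk G C') (hCodd : (C.length - 1) % 2 = 1)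
    (hC'odd : (C'.length - 1) % 2 = 1) : inv2 S (walkEdges C) = inv2 S (walkEdges C') := by
  obtain ⟨v, c, rfl⟩ := hC.exists_support_eq
  obtain ⟨v', c', rfl⟩ := hC'.exists_support_eq
  obtain ⟨q⟩ := hG.1.preconnected v v'
  let D : G.Walk v v := q.append (c'.append q.reverse)
  have hcD : Homotopic G c.support D.support := by
    simp only [SimpleGraph.Walk.length_support] at hCodd hC'odd
    refine hG.2 _ _ (isWalk_support c) (isWalk_support D) (by rw [head?_support, head?_support])
      (by rw [getLast?_support, getLast?_support]) ?_
    simp [D]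
    omega
  rw [inv2_walkEdges_homotopic hS hcD (isWalk_support c), walkEdges_support, walkEdges_support,
    SimpleGraph.Walk.edges_append, SimpleGraph.Walk.edges_append, SimpleGraph.Walk.edges_reverse]
  simp only [← Multiset.coe_add, Multiset.coe_reverse]
  rw [add_comm (c'.edges : Multiset (Sym2 V)), ← add_assoc, inv2_add_self_add]

lemma c4Equiv_of_mem_square {H : SimpleGraph W} {x y z w : W} (hxz : x ≠ z) (hyw : y ≠ w)
    (hxy : H.Adj x y) (hyz : H.Adj y z) (hzw : H.Adj z w) (hwx : H.Adj w x) ⦃e f : Sym2 W⦄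
    (he : e ∈ [s(x, y), s(y, z), s(z, w), s(w, x)])
    (hf : f ∈ [s(x, y), s(y, z), s(z, w), s(w, x)]) : C4Equiv H e f :=
  .rel _ _ ⟨x, y, z, w, hxy.ne, hxz, hwx.ne.symm, hyz.ne, hyw, hzw.ne, hxy, hyz, hzw, hwx,
    by simpa using he, by simpa using hf⟩

section PhiStable

variable {G : SimpleGraph V} {H : SimpleGraph W} {φ : G →g H} {A : Set (Sym2 V)}

lemma PhiStable.mem_iff_of_touch (hA : PhiStable φ A) {e f : Sym2 V} (he : e ∈ G.edgeSet)
    (hf : f ∈ G.edgeSet) (hef : C4Equiv H (Sym2.map φ e) (Sym2.map φ f)) (ht : Touch e f) :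
    e ∈ A ↔ f ∈ A := by
  have hstep : ∀ {x y : Sym2 V}, x ∈ G.edgeSet → y ∈ G.edgeSet →
      C4Equiv H (Sym2.map φ x) (Sym2.map φ y) → Touch x y → x ∈ A → y ∈ A :=
    fun hx hy hxy hxy' hxA =>
      hA.2 _ hxA (.single ⟨hx, hy, .refl _, .symm _ _ hxy, hxy'⟩)
  obtain ⟨v, hve, hvf⟩ := ht
  exact ⟨hstep he hf hef ⟨v, hve, hvf⟩, hstep hf he (.symm _ _ hef) ⟨v, hvf, hve⟩⟩

lemma PhiStable.square_cases (hA : PhiStable φ A) {a b c b' : V} (hab : G.Adj a b)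
    (hbc : G.Adj b c) (hab' : G.Adj a b') (hb'c : G.Adj b' c) :
    (φ b = φ b' ∧ (s(a, b) ∈ A ↔ s(a, b') ∈ A) ∧ (s(b, c) ∈ A ↔ s(b', c) ∈ A)) ∨
    (φ a = φ c ∧ (s(a, b) ∈ A ↔ s(b, c) ∈ A) ∧ (s(a, b') ∈ A ↔ s(b', c) ∈ A)) ∨
    (φ a ≠ φ c ∧ φ b ≠ φ b' ∧ (s(a, b) ∈ A ↔ s(b, c) ∈ A) ∧
      (s(a, b) ∈ A ↔ s(a, b') ∈ A) ∧ (s(b, c) ∈ A ↔ s(b', c) ∈ A)) := by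
  by_cases hbb' : φ b = φ b'
  · refine .inl ⟨hbb', hA.mem_iff_of_touch hab hab' ?_ ⟨a, by simp, by simp⟩,
      hA.mem_iff_of_touch hbc hb'c ?_ ⟨c, by simp, by simp⟩⟩ <;>
      simpa [hbb'] using .refl _
  by_cases hac : φ a = φ c
  · refine .inr (.inl ⟨hac, hA.mem_iff_of_touch hab hbc ?_ ⟨b, by simp, by simp⟩,
      hA.mem_iff_of_touch hab' hb'c ?_ ⟨b', by simp, by simp⟩⟩) <;>
      simpa [← hac, Sym2.eq_swap (a := φ a)] using .refl _
  have hsq := c4Equiv_of_mem_square hac hbb' (φ.map_adj hab) (φ.map_adj hbc)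
    (φ.map_adj hb'c).symm (φ.map_adj hab').symm
  refine .inr (.inr ⟨hac, hbb',
    hA.mem_iff_of_touch hab hbc (hsq ?_ ?_) ⟨b, ?_, ?_⟩,
    hA.mem_iff_of_touch hab hab' (hsq ?_ ?_) ⟨a, ?_, ?_⟩,
    hA.mem_iff_of_touch hbc hb'c (hsq ?_ ?_) ⟨c, ?_, ?_⟩⟩) <;> simp [Sym2.eq_swap]

theorem PhiStable.meetsSquaresEvenly (hA : PhiStable φ A) : MeetsSquaresEvenly G A := by
  intro a b c b' hab hbc hab' hb'c
  rcases hA.square_cases hab hbc hab' hb'c with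
    ⟨-, h1, h2⟩ | ⟨-, h1, h2⟩ | ⟨-, -, h1, h2, h3⟩ <;> tauto

lemma mem_Au_mk {u : W} {x y : V} :
    s(x, y) ∈ Au φ A u ↔ s(x, y) ∈ A ∧ (φ x = u ∨ φ y = u) := by
  simp [Au]

theorem PhiStable.meetsSquaresEvenly_Au (hA : PhiStable φ A) (u : W) :
    MeetsSquaresEvenly G (Au φ A u) := by
  intro a b c b' hab hbc hab' hb'c
  simp only [mem_Au_mk]
  rcases hA.square_cases hab hbc hab' hb'c with
    ⟨hbb', h1, h2⟩ | ⟨hac, h1, h2⟩ | ⟨hac, hbb', h1, h2, h3⟩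
  · rw [← hbb']; tauto
  · rw [← hac]; tauto
  · grind [(φ.map_adj hab).ne, (φ.map_adj hbc).ne, (φ.map_adj hab').ne, (φ.map_adj hb'c).ne]

end PhiStable

/-- In a simply connected graph, any two odd closed walks have the same
intersection invariants. -/
theorem inv_odd_closed_walks_eq (G : SimpleGraph V) (H : SimpleGraph W)
    (φ : G →g H) (hG : SimplyConnected G)
    (A : Set (Sym2 V)) (hA : PhiStable φ A)
    (C C' : List V) (hC : IsClosedWalk G C) (hC' : IsClosedWalk G C')
    (hCodd : (C.length - 1) % 2 = 1) (hC'odd : (C'.length - 1) % 2 = 1) :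
    inv2 A (walkEdges C) = inv2 A (walkEdges C') ∧
      ∀ u : W, inv2 (Au φ A u) (walkEdges C) = inv2 (Au φ A u) (walkEdges C') :=
  ⟨inv2_walkEdges_eq_of_odd hG hA.meetsSquaresEvenly hC hC' hCodd hC'odd,
    fun u => inv2_walkEdges_eq_of_odd hG (hA.meetsSquaresEvenly_Au u) hC hC' hCodd hC'odd⟩

end Discrete
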